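/- Let G = (V,E) be a finite connected graph, k ≥ 1, and for a partition λ = (j_1, j_2, …) of k, let C(λ) ∈ M(V)^{⊗N} be the sum over all placements, of the h-distance matrix D^{[h]} at j_h distinct tensor positions for each h (identity elsewhere), of the corresponding elementary tensors. Let φ be the normalized trace on M(V)^{⊗N}, φ(a) = |V|^{-N} Tr(a). Then for every partition λ of k other than λ_0 = (k,0,0,…), and for every integer m ≥ 1, lim_{N→∞} φ( (C(λ)/N^{k/2})^m ) = 0; indeed φ( (C(λ)/N^{k/2})^m ) = O(N^{-m/2}). -/

import Mathlib

open scoped Classical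
open Filter Topology

noncomputable section

/-- The `N`-fold Cartesian power of a graph `G`: two vertices `x y : Fin N → V` are
adjacent iff there is exactly one index `i` with `x i` adjacent to `y i` in `G`
and `x j = y j` for all `j ≠ i`. -/
def cartPower {V : Type*} (G : SimpleGraph V) (N : ℕ) : SimpleGraph (Fin N → V) where
  Adj x y := ∃! i, G.Adj (x i) (y i) ∧ ∀ j, j ≠ i → x j = y j
  symm := by
    refine ⟨?_⟩
    rintro x y ⟨i, ⟨hadj, hrest⟩, huniq⟩
    exact ⟨i, ⟨hadj.symm, fun j hj => (hrest j hj).symm⟩,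
      fun i' ⟨hadj', hrest'⟩ => huniq i' ⟨hadj'.symm, fun j hj => (hrest' j hj).symm⟩⟩
  loopless := by
    refine ⟨?_⟩
    rintro x ⟨i, ⟨hadj, -⟩, -⟩
    exact G.irrefl hadj

/-- The distance `k`-graph of a graph `G`: same vertex set, with an edge `{x, y}`
whenever the graph distance of `x` and `y` in `G` equals `k`. -/
def distanceGraph {V : Type*} (G : SimpleGraph V) (k : ℕ) : SimpleGraph V where
  Adj x y := x ≠ y ∧ G.dist x y = k
  symm := by
    refine ⟨?_⟩
    rintro x y ⟨hne, hd⟩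
    exact ⟨hne.symm, by rwa [SimpleGraph.dist_comm]⟩
  loopless := by refine ⟨?_⟩; rintro x ⟨hne, -⟩; exact hne rfl

/-- `M(V)^{⊗N}` is identified with matrices indexed by `V^N × V^N`: the elementary
tensor `B_1 ⊗ ⋯ ⊗ B_N` has `(x, y)` entry `∏ i, (B i) (x i) (y i)`. -/
def elemTensor {V : Type*} [Fintype V] {N : ℕ} (B : Fin N → Matrix V V ℂ) :
    Matrix (Fin N → V) (Fin N → V) ℂ :=
  Matrix.of fun x y => ∏ i, B i (x i) (y i)

/-- The elementary tensor with `b` at the `i`-th position and identity matrices elsewhere. -/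
def matAt {V : Type*} [Fintype V] {N : ℕ} (b : Matrix V V ℂ) (i : Fin N) :
    Matrix (Fin N → V) (Fin N → V) ℂ :=
  elemTensor (Function.update (fun _ => (1 : Matrix V V ℂ)) i b)

/-- The `h`-distance matrix `D^{[h]}` of a graph: the 0-1 matrix indexed by `V × V`
whose `(ξ, η)` entry is `1` exactly when `∂_G(ξ, η) = h`. -/
def distMatrix {V : Type*} (G : SimpleGraph V) (h : ℕ) : Matrix V V ℂ :=
  Matrix.of fun ξ η => if G.dist ξ η = h then 1 else 0

/-- `C(λ) ∈ M(V)^{⊗N}` for a partition `λ` of `k` with multiplicities `j h` of the part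
`h`: the sum over all placements of `D^{[h]}` at `j h` distinct tensor positions, for
each `h ≥ 1` (with identity matrices at the remaining positions), of the corresponding
elementary tensors. A placement is encoded by a function `f : Fin N → Fin (k + 1)`,
position `i` carrying `D^{[f i]}` if `f i ≥ 1` and the identity if `f i = 0`. -/
def Cpart {V : Type*} [Fintype V] (G : SimpleGraph V) (N k : ℕ) (j : ℕ → ℕ) :
    Matrix (Fin N → V) (Fin N → V) ℂ :=
  ∑ f ∈ Finset.univ.filter
      (fun f : Fin N → Fin (k + 1) => ∀ h : ℕ, 1 ≤ h →
        (Finset.univ.filter fun i => (f i : ℕ) = h).card = j h),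
    elemTensor fun i => if (f i : ℕ) = 0 then 1 else distMatrix G (f i)

/-!
Expanding `C(λ)^m` over `m`-tuples of placements writes `Tr (C(λ)^m)` as a sum, over the tuples,
of products over the `N` tensor positions of traces of words in the `D^{[h]}` and the identity.
Since `Tr D^{[h]} = 0` for `h ≥ 1`, a tuple contributes only if no position is occupied by exactly
one of its placements. Each placement occupies `p = ∑ h, j h` positions, so a contributing tuple
occupies at most `m p / 2` positions: there are `O(N ^ (m p / 2))` of them, each contributing
`O(|V| ^ N)`. Finally `λ ≠ λ₀` forces `p ≤ k - 1`, so the normalized moment is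
`O(N ^ (m p / 2 - m k / 2)) = O(N ^ (-m / 2))`.
-/

open scoped Finset

section ElemTensor

variable {V : Type*} [Fintype V] {N : ℕ}

theorem elemTensor_one [DecidableEq V] :
    elemTensor (fun _ : Fin N => (1 : Matrix V V ℂ)) = 1 := by
  ext x y
  simp only [elemTensor, Matrix.of_apply, Matrix.one_apply, Finset.prod_boole]
  simp [funext_iff]

theorem elemTensor_mul (B B' : Fin N → Matrix V V ℂ) :
    elemTensor (B * B') = elemTensor B * elemTensor B' := by
  ext x y
  simp only [elemTensor, Matrix.mul_apply, Matrix.of_apply, Pi.mul_apply, Finset.prod_univ_sum,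
    Fintype.piFinset_univ, Finset.prod_mul_distrib]

theorem prod_ofFn_elemTensor [DecidableEq V] {m : ℕ} (B : Fin m → Fin N → Matrix V V ℂ) :
    (List.ofFn fun l => elemTensor (B l)).prod =
      elemTensor fun i => (List.ofFn fun l => B l i).prod := by
  induction m with
  | zero => simp [elemTensor_one]
  | succ m ih =>
    simp only [List.ofFn_succ, List.prod_cons, ih]
    rw [← elemTensor_mul]
    rfl

theorem trace_elemTensor (B : Fin N → Matrix V V ℂ) :
    (elemTensor B).trace = ∏ i, (B i).trace := by
  simp only [Matrix.trace, Matrix.diag, elemTensor, Matrix.of_apply, Finset.prod_univ_sum,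
    Fintype.piFinset_univ]

end ElemTensor

theorem pow_sum_eq_sum_piFinset {A ι : Type*} [Semiring A] [DecidableEq ι] (s : Finset ι)
    (x : ι → A) (m : ℕ) :
    (∑ a ∈ s, x a) ^ m =
      ∑ F ∈ Fintype.piFinset fun _ : Fin m => s, (List.ofFn fun l => x (F l)).prod := by
  simpa using (MultilinearMap.mkPiAlgebraFin ℕ m A).map_sum_finset (fun _ => x) (fun _ => s)

theorem List.prod_ofFn_eq_of_forall_ne {M : Type*} [Monoid M] {m : ℕ} (g : Fin m → M)
    (l₀ : Fin m) (h : ∀ l, l ≠ l₀ → g l = 1) : (List.ofFn g).prod = g l₀ := by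
  induction m with
  | zero => exact l₀.elim0
  | succ m ih =>
    rw [List.ofFn_succ, List.prod_cons]
    cases l₀ using Fin.cases with
    | zero =>
      rw [List.prod_eq_one (by simpa using fun l => h l.succ (Fin.succ_ne_zero l)), mul_one]
    | succ l₀ =>
      rw [h 0 (Fin.succ_ne_zero l₀).symm, one_mul]
      exact ih _ l₀ fun l hl => h l.succ (Fin.succ_injective _ |>.ne hl)

section MatrixBounds

variable {V 𝕜 : Type*} [Fintype V] [DecidableEq V] [NormedRing 𝕜] [NormOneClass 𝕜]

theorem norm_list_prod_apply_le (L : List (Matrix V V 𝕜)) (hL : ∀ A ∈ L, ∀ x y, ‖A x y‖ ≤ 1)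
    (x y : V) : ‖L.prod x y‖ ≤ (Fintype.card V : ℝ) ^ L.length := by
  induction L generalizing x with
  | nil => by_cases h : x = y <;> simp [h]
  | cons A L ih =>
    rw [List.prod_cons, Matrix.mul_apply, List.length_cons, pow_succ']
    calc ‖∑ z, A x z * L.prod z y‖
        ≤ ∑ z, ‖A x z‖ * ‖L.prod z y‖ :=
          (norm_sum_le _ _).trans (Finset.sum_le_sum fun z _ => norm_mul_le _ _)
      _ ≤ ∑ _z : V, 1 * (Fintype.card V : ℝ) ^ L.length := by
          gcongr with z
          · exact hL A List.mem_cons_self x z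
          · exact ih (fun B hB => hL B (List.mem_cons_of_mem A hB)) z
      _ = (Fintype.card V : ℝ) * (Fintype.card V : ℝ) ^ L.length := by simp

theorem norm_trace_list_prod_le (L : List (Matrix V V 𝕜))
    (hL : ∀ A ∈ L, ∀ x y, ‖A x y‖ ≤ 1) :
    ‖L.prod.trace‖ ≤ (Fintype.card V : ℝ) ^ (L.length + 1) := by
  calc ‖L.prod.trace‖ ≤ ∑ x, ‖L.prod x x‖ := norm_sum_le _ _
    _ ≤ ∑ _x : V, (Fintype.card V : ℝ) ^ L.length :=
        Finset.sum_le_sum fun x _ => norm_list_prod_apply_le L hL x x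
    _ = (Fintype.card V : ℝ) ^ (L.length + 1) := by simp [pow_succ']

end MatrixBounds

section Placements

variable {V α : Type*} [Fintype V] [DecidableEq V] [Zero α] [DecidableEq α] {m N : ℕ}

theorem trace_prod_ofFn_eq_zero_of_card_eq_one {R : Type*} [Semiring R] {B : α → Matrix V V R}
    (hB0 : B 0 = 1) (htr : ∀ a, a ≠ 0 → (B a).trace = 0) (c : Fin m → α) (hc : #{l | c l ≠ 0} = 1) :
    (List.ofFn fun l => B (c l)).prod.trace = 0 := by
  obtain ⟨l₀, hl₀⟩ := Finset.card_eq_one.1 hc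
  have hsupp : ∀ l, c l ≠ 0 ↔ l = l₀ := by simpa [Finset.ext_iff] using hl₀
  rw [List.prod_ofFn_eq_of_forall_ne _ l₀ fun l hl => by
    rw [not_ne_iff.1 (mt (hsupp l).1 hl), hB0]]
  exact htr _ ((hsupp l₀).2 rfl)

def usedCoords (F : Fin m → Fin N → α) : Finset (Fin N) := {i | ∃ l, F l i ≠ 0}

theorem two_mul_card_usedCoords_le (F : Fin m → Fin N → α) {p : ℕ}
    (hrow : ∀ l, #{i | F l i ≠ 0} = p) (hcol : ∀ i, #{l | F l i ≠ 0} ≠ 1) :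
    2 * #(usedCoords F) ≤ m * p := by
  have hused : ∀ i ∈ usedCoords F, 2 ≤ #{l | F l i ≠ 0} := by
    intro i hi
    obtain ⟨l, hl⟩ := (Finset.mem_filter.1 hi).2
    have : 0 < #{l | F l i ≠ 0} := Finset.card_pos.2 ⟨l, by simpa using hl⟩
    have := hcol i
    omega
  calc 2 * #(usedCoords F) = ∑ _i ∈ usedCoords F, 2 := by simp [mul_comm]
    _ ≤ ∑ i ∈ usedCoords F, #{l | F l i ≠ 0} := Finset.sum_le_sum hused
    _ ≤ ∑ i, #{l | F l i ≠ 0} := Finset.sum_le_sum_of_subset (Finset.subset_univ _)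
    _ = ∑ l, #{i | F l i ≠ 0} := by simp only [Finset.card_filter]; exact Finset.sum_comm
    _ = m * p := by simp [hrow]

theorem norm_prod_trace_prod_ofFn_le {B : α → Matrix V V ℂ} (hB0 : B 0 = 1)
    (hB : ∀ a x y, ‖B a x y‖ ≤ 1) (F : Fin m → Fin N → α) :
    ‖∏ i, (List.ofFn fun l => B (F l i)).prod.trace‖ ≤
      (Fintype.card V : ℝ) ^ (N + m * #(usedCoords F)) := by
  have hused : ∀ i, ‖(List.ofFn fun l => B (F l i)).prod.trace‖ ≤
      (Fintype.card V : ℝ) ^ (m + 1) := fun i => by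
    simpa using norm_trace_list_prod_le (List.ofFn fun l => B (F l i)) fun A hA => by
      obtain ⟨l, rfl⟩ := List.mem_ofFn.1 hA
      exact hB _
  have hunused : ∀ i ∉ usedCoords F, ‖(List.ofFn fun l => B (F l i)).prod.trace‖ =
      Fintype.card V := fun i hi => by
    have hzero : ∀ l, F l i = 0 := by simpa [usedCoords] using hi
    simp [hzero, hB0]
  rw [norm_prod, ← Finset.prod_mul_prod_compl (usedCoords F),
    Finset.prod_congr rfl fun i hi => hunused i (Finset.mem_compl.1 hi), Finset.prod_const,
    Finset.card_compl, Fintype.card_fin]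
  calc (∏ i ∈ usedCoords F, ‖(List.ofFn fun l => B (F l i)).prod.trace‖) *
        (Fintype.card V : ℝ) ^ (N - #(usedCoords F))
      ≤ ((Fintype.card V : ℝ) ^ (m + 1)) ^ #(usedCoords F) *
        (Fintype.card V : ℝ) ^ (N - #(usedCoords F)) := by
        gcongr
        rw [← Finset.prod_const]
        exact Finset.prod_le_prod (fun _ _ => norm_nonneg _) fun i _ => hused i
    _ = (Fintype.card V : ℝ) ^ (N + m * #(usedCoords F)) := by
        rw [← pow_mul, ← pow_add]
        have : #(usedCoords F) ≤ N := by simpa using Finset.card_le_univ (usedCoords F)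
        congr 1
        rw [add_mul, one_mul]
        omega

end Placements

theorem card_filter_card_le_le {N : ℕ} (hN : 1 ≤ N) (q : ℕ) :
    #{S : Finset (Fin N) | #S ≤ q} ≤ (q + 1) * N ^ q := by
  calc #{S : Finset (Fin N) | #S ≤ q}
      ≤ #((Finset.range (q + 1)).biUnion fun s => Finset.powersetCard s Finset.univ) :=
        Finset.card_le_card fun S hS => by
          simp only [Finset.mem_filter] at hS
          simpa [Finset.mem_biUnion, Nat.lt_succ_iff] using hS
    _ ≤ ∑ s ∈ Finset.range (q + 1), #(Finset.powersetCard s (Finset.univ : Finset (Fin N))) :=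
        Finset.card_biUnion_le
    _ ≤ ∑ _s ∈ Finset.range (q + 1), N ^ q := by
        gcongr with s hs
        rw [Finset.card_powersetCard, Finset.card_univ, Fintype.card_fin]
        exact (Nat.choose_le_pow N s).trans
          (Nat.pow_le_pow_right hN (Nat.lt_succ_iff.1 (Finset.mem_range.1 hs)))
    _ = (q + 1) * N ^ q := by simp

theorem card_filter_card_usedCoords_le {α : Type*} [Fintype α] [Zero α] [DecidableEq α]
    {m N : ℕ} (hN : 1 ≤ N) (q : ℕ) :
    #{F : Fin m → Fin N → α | #(usedCoords F) ≤ q} ≤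
      (q + 1) * N ^ q * Fintype.card α ^ (m * q) := by
  let supportedIn (S : Finset (Fin N)) : Finset (Fin m → Fin N → α) :=
    Fintype.piFinset fun _ => Fintype.piFinset fun i => if i ∈ S then Finset.univ else {0}
  have hcard : ∀ S, #(supportedIn S) = Fintype.card α ^ (m * #S) := fun S => by
    simp [supportedIn, Fintype.card_piFinset, apply_ite Finset.card, Finset.prod_ite_mem,
      ← pow_mul, mul_comm]
  calc #{F : Fin m → Fin N → α | #(usedCoords F) ≤ q}
      ≤ #(({S : Finset (Fin N) | #S ≤ q} : Finset _).biUnion supportedIn) :=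
        Finset.card_le_card fun F hF => Finset.mem_biUnion.2
          ⟨usedCoords F, by simpa using hF, by
            simp only [supportedIn, Fintype.mem_piFinset]
            intro l i
            split_ifs with hi
            · exact Finset.mem_univ _
            · have hzero : ∀ l, F l i = 0 := by simpa [usedCoords] using hi
              simp [hzero]⟩
    _ ≤ ∑ S ∈ {S : Finset (Fin N) | #S ≤ q}, #(supportedIn S) := Finset.card_biUnion_le
    _ ≤ ∑ _S ∈ {S : Finset (Fin N) | #S ≤ q}, Fintype.card α ^ (m * q) := by
        gcongr with S hS
        rw [hcard]
        exact Nat.pow_le_pow_right Fintype.card_pos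
          (Nat.mul_le_mul_left m (Finset.mem_filter.1 hS).2)
    _ ≤ (q + 1) * N ^ q * Fintype.card α ^ (m * q) := by
        rw [Finset.sum_const, smul_eq_mul]
        gcongr
        exact card_filter_card_le_le hN q

theorem norm_trace_pow_sum_elemTensor_le {V α : Type*} [Fintype V] [DecidableEq V] [Nonempty V]
    [Fintype α] [Zero α] [DecidableEq α] {B : α → Matrix V V ℂ} (hB0 : B 0 = 1)
    (htr : ∀ a, a ≠ 0 → (B a).trace = 0) (hB : ∀ a x y, ‖B a x y‖ ≤ 1)
    {N p : ℕ} (hN : 1 ≤ N) (S : Finset (Fin N → α)) (hS : ∀ f ∈ S, #{i | f i ≠ 0} = p)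
    (m : ℕ) :
    ‖((∑ f ∈ S, elemTensor fun i => B (f i)) ^ m).trace‖ ≤
      (((m * p / 2 + 1) * N ^ (m * p / 2) * Fintype.card α ^ (m * (m * p / 2)) : ℕ) : ℝ) *
        (Fintype.card V : ℝ) ^ (N + m * (m * p / 2)) := by
  set q := m * p / 2
  set bound : (Fin m → Fin N → α) → ℝ := fun F =>
    if #(usedCoords F) ≤ q then (Fintype.card V : ℝ) ^ (N + m * q) else 0
  have hterm : ∀ F ∈ Fintype.piFinset fun _ : Fin m => S,
      ‖∏ i, (List.ofFn fun l => B (F l i)).prod.trace‖ ≤ bound F := by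
    intro F hF
    by_cases hcol : ∃ i, #{l | F l i ≠ 0} = 1
    · obtain ⟨i, hi⟩ := hcol
      rw [Finset.prod_eq_zero (Finset.mem_univ i)
        (trace_prod_ofFn_eq_zero_of_card_eq_one hB0 htr _ hi), norm_zero]
      unfold bound
      split_ifs <;> positivity
    · push Not at hcol
      have hq : #(usedCoords F) ≤ q := by
        have := two_mul_card_usedCoords_le F (fun l => hS _ (Fintype.mem_piFinset.1 hF l)) hcol
        omega
      simp only [bound, if_pos hq]
      exact (norm_prod_trace_prod_ofFn_le hB0 hB F).trans
        (pow_le_pow_right₀ (by exact_mod_cast Fintype.card_pos) (by gcongr))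
  rw [pow_sum_eq_sum_piFinset, Matrix.trace_sum]
  simp_rw [prod_ofFn_elemTensor, trace_elemTensor]
  calc _ ≤ ∑ F ∈ Fintype.piFinset fun _ : Fin m => S,
        ‖∏ i, (List.ofFn fun l => B (F l i)).prod.trace‖ := norm_sum_le _ _
    _ ≤ ∑ F, bound F :=
        (Finset.sum_le_sum hterm).trans (Finset.sum_le_sum_of_subset_of_nonneg
          (Finset.subset_univ _) fun F _ _ => by unfold bound; split_ifs <;> positivity)
    _ = #{F : Fin m → Fin N → α | #(usedCoords F) ≤ q} *
          (Fintype.card V : ℝ) ^ (N + m * q) := by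
        simp [bound, Finset.sum_ite]
    _ ≤ _ := by
        gcongr
        exact_mod_cast card_filter_card_usedCoords_le hN q

def partCount (k : ℕ) (j : ℕ → ℕ) : ℕ := ∑ h ∈ Finset.Icc 1 k, j h

theorem partCount_add_one_le {k : ℕ} (hk : 1 ≤ k) {j : ℕ → ℕ} (hpart : ∑ᶠ h : ℕ, h * j h = k)
    (hne : ∃ h : ℕ, 2 ≤ h ∧ j h ≠ 0) : partCount k j + 1 ≤ k := by
  have hfin : Function.HasFiniteSupport fun h => h * j h := by
    by_contra hinf
    rw [finsum_of_infinite_support hinf] at hpart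
    omega
  have hle : ∀ h, j h ≠ 0 → h ≤ k := fun h hj =>
    (Nat.le_mul_of_pos_right h (Nat.pos_of_ne_zero hj)).trans
      (hpart ▸ single_le_finsum h hfin fun _ => Nat.zero_le _)
  have hsupp : Function.support (fun h => h * j h) ⊆ Finset.Icc 1 k := fun h hh => by
    rw [Function.mem_support, mul_ne_zero_iff] at hh
    rw [Finset.coe_Icc, Set.mem_Icc]
    exact ⟨Nat.one_le_iff_ne_zero.2 hh.1, hle h hh.2⟩
  obtain ⟨h₀, hh₀, hj₀⟩ := hne
  calc partCount k j + 1 ≤ ∑ h ∈ Finset.Icc 1 k, h * j h :=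
        Finset.sum_lt_sum (fun h hh => Nat.le_mul_of_pos_left _ (Finset.mem_Icc.1 hh).1)
          ⟨h₀, Finset.mem_Icc.2 ⟨by omega, hle h₀ hj₀⟩,
            (Nat.lt_mul_iff_one_lt_left (Nat.pos_of_ne_zero hj₀)).2 hh₀⟩
    _ = k := by rw [← finsum_eq_finsetSum_of_support_subset _ hsupp, hpart]

theorem card_filter_ne_zero_eq_partCount {N k : ℕ} {j : ℕ → ℕ} {f : Fin N → Fin (k + 1)}
    (hf : ∀ h : ℕ, 1 ≤ h → (Finset.univ.filter fun i => (f i : ℕ) = h).card = j h) :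
    #{i | f i ≠ 0} = partCount k j := by
  rw [Finset.card_eq_sum_card_fiberwise (f := fun i => (f i : ℕ)) (t := Finset.Icc 1 k)]
  · refine Finset.sum_congr rfl fun h hh => ?_
    rw [← hf h (Finset.mem_Icc.1 hh).1, Finset.filter_filter]
    congr 1
    ext i
    simp only [Finset.mem_filter, Finset.mem_univ, true_and, and_iff_right_iff_imp]
    intro hfi
    rw [← Fin.val_ne_zero_iff, hfi]
    exact Nat.one_le_iff_ne_zero.1 (Finset.mem_Icc.1 hh).1
  · intro i hi
    have hfi : f i ≠ 0 := (Finset.mem_filter.1 hi).2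
    rw [Finset.mem_coe, Finset.mem_Icc]
    exact ⟨Nat.one_le_iff_ne_zero.2 (Fin.val_ne_zero_iff.2 hfi), Nat.lt_succ_iff.1 (f i).isLt⟩

def distBlock {V : Type*} (G : SimpleGraph V) (k : ℕ) (a : Fin (k + 1)) : Matrix V V ℂ :=
  if (a : ℕ) = 0 then 1 else distMatrix G a

theorem Cpart_eq_sum_elemTensor_distBlock {V : Type*} [Fintype V] (G : SimpleGraph V)
    (N k : ℕ) (j : ℕ → ℕ) :
    Cpart G N k j = ∑ f ∈ Finset.univ.filter (fun f : Fin N → Fin (k + 1) => ∀ h : ℕ, 1 ≤ h →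
        (Finset.univ.filter fun i => (f i : ℕ) = h).card = j h),
      elemTensor fun i => distBlock G k (f i) :=
  rfl

theorem trace_distMatrix_of_ne_zero {V : Type*} [Fintype V] (G : SimpleGraph V) {h : ℕ}
    (hh : h ≠ 0) : (distMatrix G h).trace = 0 :=
  Finset.sum_eq_zero fun ξ _ => by simp [distMatrix, hh.symm]

theorem norm_distBlock_apply_le {V : Type*} (G : SimpleGraph V) (k : ℕ) (a : Fin (k + 1))
    (x y : V) : ‖distBlock G k a x y‖ ≤ 1 := by
  unfold distBlock distMatrix
  split_ifs <;> simp [Matrix.one_apply] <;> split_ifs <;> simp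

theorem exists_norm_trace_Cpart_pow_le {V : Type*} [Fintype V] [DecidableEq V] [Nonempty V]
    (G : SimpleGraph V) (k : ℕ) (j : ℕ → ℕ) (m : ℕ) :
    ∃ C : ℝ, 0 ≤ C ∧ ∀ N : ℕ, 1 ≤ N →
      ‖((Cpart G N k j) ^ m).trace‖ ≤
        C * (N : ℝ) ^ (m * partCount k j / 2) * (Fintype.card V : ℝ) ^ N := by
  obtain ⟨q, hq⟩ : ∃ q, m * partCount k j / 2 = q := ⟨_, rfl⟩
  rw [hq]
  refine ⟨(q + 1) * (k + 1) ^ (m * q) * (Fintype.card V : ℝ) ^ (m * q), by positivity,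
    fun N hN => ?_⟩
  -- Not `rfl`: the identity in `distBlock` uses classical decidable equality on `V`.
  have hB0 : distBlock G k 0 = 1 := by ext; simp [distBlock, Matrix.one_apply]
  have htr : ∀ a, a ≠ 0 → (distBlock G k a).trace = 0 := fun a ha => by
    simpa [distBlock, Fin.val_ne_zero_iff.2 ha] using
      trace_distMatrix_of_ne_zero G (Fin.val_ne_zero_iff.2 ha)
  rw [Cpart_eq_sum_elemTensor_distBlock]
  refine (norm_trace_pow_sum_elemTensor_le hB0 htr (norm_distBlock_apply_le G k) hN _
    (fun f hf => card_filter_ne_zero_eq_partCount (Finset.mem_filter.1 hf).2) m).trans_eq ?_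
  rw [hq, Fintype.card_fin]
  push_cast
  ring

theorem rpow_neg_div_two_pow_mul_pow_le {x : ℝ} (hx : 1 ≤ x) {k m q : ℕ}
    (h : 2 * q + m ≤ m * k) : (x ^ (-(k : ℝ) / 2)) ^ m * x ^ q ≤ x ^ (-(m : ℝ) / 2) := by
  rw [← Real.rpow_natCast, ← Real.rpow_mul (by positivity), ← Real.rpow_natCast x q,
    ← Real.rpow_add (by positivity)]
  refine Real.rpow_le_rpow_of_exponent_le hx ?_
  have h' : (2 * q + m : ℝ) ≤ m * k := by exact_mod_cast h
  linarith

theorem exists_norm_moment_Cpart_le {V : Type*} [Fintype V] [DecidableEq V] [Nonempty V]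
    (G : SimpleGraph V) {k : ℕ} (hk : 1 ≤ k) {j : ℕ → ℕ} (hpart : ∑ᶠ h : ℕ, h * j h = k)
    (hne : ∃ h : ℕ, 2 ≤ h ∧ j h ≠ 0) (m : ℕ) :
    ∃ C : ℝ, ∀ N : ℕ, 1 ≤ N →
      ‖((Fintype.card V : ℂ) ^ N)⁻¹ *
          Matrix.trace (((((N : ℝ) ^ (-(k : ℝ) / 2) : ℝ) : ℂ) • Cpart G N k j) ^ m)‖ ≤
        C * (N : ℝ) ^ (-(m : ℝ) / 2) := by
  obtain ⟨C, hC0, hC⟩ := exists_norm_trace_Cpart_pow_le G k j m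
  have hexp : 2 * (m * partCount k j / 2) + m ≤ m * k := by
    have := Nat.mul_le_mul_left m (partCount_add_one_le hk hpart hne)
    rw [Nat.mul_succ] at this
    omega
  refine ⟨C, fun N hN => ?_⟩
  set r : ℝ := (N : ℝ) ^ (-(k : ℝ) / 2)
  rw [smul_pow, Matrix.trace_smul, smul_eq_mul, norm_mul, norm_mul, norm_inv, norm_pow,
    norm_pow, Complex.norm_natCast, Complex.norm_real, Real.norm_of_nonneg (by positivity)]
  calc ((Fintype.card V : ℝ) ^ N)⁻¹ * (r ^ m * ‖(Cpart G N k j ^ m).trace‖)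
      ≤ ((Fintype.card V : ℝ) ^ N)⁻¹ *
          (r ^ m * (C * (N : ℝ) ^ (m * partCount k j / 2) * (Fintype.card V : ℝ) ^ N)) := by
        gcongr
        exact hC N hN
    _ = C * (r ^ m * (N : ℝ) ^ (m * partCount k j / 2)) := by field_simp
    _ ≤ C * (N : ℝ) ^ (-(m : ℝ) / 2) := by
        gcongr
        exact rpow_neg_div_two_pow_mul_pow_le (by exact_mod_cast hN) hexp

/-- Lemma 4.4: let `G` be a finite connected graph, `k ≥ 1`, and `λ` a partition of `k`
(given by its multiplicity function `j`, so that `∑ᶠ h, h · j h = k`) different from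
`λ₀ = (k, 0, 0, …)` (i.e. some part `h ≥ 2` occurs). Then, w.r.t. the normalized trace
`a ↦ |V|^{-N} Tr(a)` on `M(V)^{⊗N}`, the moments of `C(λ)/N^{k/2}` tend to `0` as
`N → ∞`; indeed the `m`-th moment is `O(N^{-m/2})`. -/
theorem Cpart_tendsto_zero
    {V : Type*} [Fintype V] [DecidableEq V] (G : SimpleGraph V) (hconn : G.Connected)
    (k : ℕ) (hk : 1 ≤ k) (j : ℕ → ℕ)
    (hpart : ∑ᶠ h : ℕ, h * j h = k)
    (hne : ∃ h : ℕ, 2 ≤ h ∧ j h ≠ 0)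
    (m : ℕ) (hm : 1 ≤ m) :
    Tendsto
      (fun N : ℕ =>
        ((Fintype.card V : ℂ) ^ N)⁻¹ *
          Matrix.trace (((((N : ℝ) ^ (-(k : ℝ) / 2) : ℝ) : ℂ) • Cpart G N k j) ^ m))
      atTop (𝓝 0) ∧
    (fun N : ℕ =>
        ((Fintype.card V : ℂ) ^ N)⁻¹ *
          Matrix.trace (((((N : ℝ) ^ (-(k : ℝ) / 2) : ℝ) : ℂ) • Cpart G N k j) ^ m))
      =O[atTop] (fun N : ℕ => (N : ℝ) ^ (-(m : ℝ) / 2)) := by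
  have : Nonempty V := hconn.nonempty
  obtain ⟨C, hC⟩ := exists_norm_moment_Cpart_le G hk hpart hne m
  have hlim : Tendsto (fun N : ℕ => (N : ℝ) ^ (-(m : ℝ) / 2)) atTop (𝓝 0) := by
    rw [neg_div]
    exact (tendsto_rpow_neg_atTop (div_pos (Nat.cast_pos.2 hm) two_pos)).comp
      tendsto_natCast_atTop_atTop
  refine (and_iff_right_of_imp fun hO => hO.trans_tendsto hlim).2 ?_
  refine Asymptotics.IsBigO.of_bound C (eventually_atTop.2 ⟨1, fun N hN => ?_⟩)
  rw [Real.norm_of_nonneg (by positivity)]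
  exact hC N hN
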